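/- arXiv:2303.14600 — 2 statements merged into one kernel-verified Lean document; each statement's English description precedes it below -/
import Mathlib

section
/- Let R and S be integers and ℓ an odd prime with ℓ ∤ RS. Let e ≥ 1 and J ≥ 1 be integers and let w be a unit modulo ℓ^e. Set V = #{(v₁, …, v_J) ∈ ((ℤ/ℓ^eℤ)^×)^J : ∏_{i=1}^J (R·v_i + S) ≡ w (mod ℓ^e)}. Then |φ(ℓ^e)·V − (φ(ℓ^e) − ℓ^{e−1})^J| ≤ 2·ℓ^e·(ℓ^{e−1})^{J−1}. -/
/-!
Let `P = ℓ^(e-1)` be the order of the kernel of reduction `(ℤ/ℓ^eℤ)ˣ → (ℤ/ℓℤ)ˣ`. As `v` runs over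
the units, `R v + S` takes every unit `x` with `x ≢ S (mod ℓ)` exactly once and no other unit, so
`V = N_J(w)`, the number of `J`-tuples of units outside one coset of the kernel with product `w`.
Splitting off the first coordinate gives `N_{J+1}(w) = ∑_{x ∉ coset} N_J(x⁻¹ w)`, and this
recursion is solved exactly:
`φ · N_{J+1}(w) = (φ - P)^(J+1) - (-P)^(J+1) - (-P)^J φ [w ≡ S^(J+1) (mod ℓ)]`.
The error term is therefore at most `P^J (φ + P) ≤ 2 ℓ^e P^J`.
-/

open Finset

section CommMonoid

variable {α M : Type*} [Fintype α] [CommMonoid M] [DecidableEq M]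

theorem card_filter_prod_succ_eq_sum (f : α → M) (J : ℕ) (w : M) :
    #{v : Fin (J + 1) → α | ∏ i, f (v i) = w} =
      ∑ a, #{v : Fin J → α | f a * ∏ i, f (v i) = w} := by
  simp_rw [card_filter]
  rw [← (Fin.consEquiv fun _ => α).sum_comp, Fintype.sum_prod_type]
  simp [Fin.consEquiv, Fin.prod_univ_succ]

variable [Fintype Mˣ]

theorem card_filter_mul_prod_eq_sum_units (f : α → M) (J : ℕ) (a : α) (w : Mˣ) :
    #{v : Fin J → α | f a * ∏ i, f (v i) = w} =
      ∑ y : Mˣ, if f a = y then #{v : Fin J → α | ∏ i, f (v i) = ↑(y⁻¹ * w)} else 0 := by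
  by_cases ha : IsUnit (f a)
  · obtain ⟨u, hu⟩ := ha
    simp_rw [← hu, Units.val_inj, sum_ite_eq, mem_univ, if_true, Units.val_mul,
      Units.eq_inv_mul_iff_mul_eq]
  · rw [sum_eq_zero fun (y : Mˣ) _ => if_neg fun h : f a = y => ha (h ▸ y.isUnit), card_eq_zero,
      filter_eq_empty_iff]
    exact fun v _ hv => ha (isUnit_of_mul_isUnit_left (hv ▸ w.isUnit))

theorem card_filter_prod_succ_eq_sum_fiber (f : α → M) (J : ℕ) (w : Mˣ) :
    #{v : Fin (J + 1) → α | ∏ i, f (v i) = w} =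
      ∑ y : Mˣ, #{a | f a = y} * #{v : Fin J → α | ∏ i, f (v i) = ↑(y⁻¹ * w)} := by
  simp_rw [card_filter_prod_succ_eq_sum, card_filter_mul_prod_eq_sum_units]
  rw [sum_comm]
  simp_rw [← sum_filter, sum_const, smul_eq_mul]

end CommMonoid

section Fibers

variable {G H : Type*} [Group G] [Fintype G] [Group H] [DecidableEq H]

theorem MonoidHom.card_fiber_eq_card_ker (π : G →* H) (hπ : Function.Surjective π) (t : H) :
    #{y | π y = t} = Nat.card π.ker := by
  rw [MonoidHom.card_fiber_eq_of_mem_range π (hπ t) ⟨1, map_one π⟩, ← Fintype.card_subtype,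
    ← Nat.card_eq_fintype_card]
  rfl

theorem MonoidHom.card_filter_ne_add_card_ker (π : G →* H) (hπ : Function.Surjective π) (s : H) :
    #{y | π y ≠ s} + Nat.card π.ker = Fintype.card G := by
  rw [← π.card_fiber_eq_card_ker hπ s, add_comm, card_filter_add_card_filter_not, card_univ]

theorem MonoidHom.card_filter_ne_and_eq (π : G →* H) (hπ : Function.Surjective π) (s t : H) :
    #{y | π y ≠ s ∧ π y = t} = if t = s then 0 else Nat.card π.ker := by
  split_ifs with hts
  · simp [hts]
  · rw [← π.card_fiber_eq_card_ker hπ t]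
    congr 1 with y
    grind

end Fibers

section AvoidingCoset

variable {α M H : Type*} [Fintype α] [CommMonoid M] [DecidableEq M] [Fintype Mˣ] [Group H]
  [DecidableEq H] (π : Mˣ →* H) (s : H) {f : α → M}

theorem card_filter_prod_succ_eq_sum_of_card_fiber
    (hf : ∀ y : Mˣ, #{a | f a = y} = if π y = s then 0 else 1) (J : ℕ) (w : Mˣ) :
    #{v : Fin (J + 1) → α | ∏ i, f (v i) = w} =
      ∑ y with π y ≠ s, #{v : Fin J → α | ∏ i, f (v i) = ↑(y⁻¹ * w)} := by
  simp_rw [card_filter_prod_succ_eq_sum_fiber, hf, sum_filter, ite_not, ite_mul, zero_mul, one_mul]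

theorem card_mul_card_filter_prod_eq (hπ : Function.Surjective π)
    (hf : ∀ y : Mˣ, #{a | f a = y} = if π y = s then 0 else 1) (J : ℕ) (w : Mˣ) :
    (Fintype.card Mˣ : ℤ) * #{v : Fin (J + 1) → α | ∏ i, f (v i) = w} =
      (Fintype.card Mˣ - Nat.card π.ker) ^ (J + 1) - (-(Nat.card π.ker : ℤ)) ^ (J + 1)
        - (-(Nat.card π.ker : ℤ)) ^ J * Fintype.card Mˣ * if π w = s ^ (J + 1) then 1 else 0 := by
  have hcard : (#{y | π y ≠ s} : ℤ) = Fintype.card Mˣ - Nat.card π.ker := by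
    rw [← π.card_filter_ne_add_card_ker hπ s]; push_cast; ring
  induction J generalizing w with
  | zero =>
    have hempty (y : Mˣ) : #{v : Fin 0 → α | ∏ i, f (v i) = ↑(y⁻¹ * w)} =
        if y = w then 1 else 0 := by
      simp [Units.ext_iff, eq_comm, apply_ite card]
    rw [card_filter_prod_succ_eq_sum_of_card_fiber π s hf]
    simp_rw [hempty, sum_ite_eq', mem_filter, mem_univ, true_and, zero_add, pow_one]
    by_cases h : π w = s <;> simp [h]
  | succ J ih =>
    have hcond (y : Mˣ) : π (y⁻¹ * w) = s ^ (J + 1) ↔ π y = π w * (s ^ (J + 1))⁻¹ := by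
      rw [map_mul, map_inv, inv_mul_eq_iff_eq_mul, eq_mul_inv_iff_mul_eq, eq_comm]
    rw [card_filter_prod_succ_eq_sum_of_card_fiber π s hf, Nat.cast_sum, mul_sum]
    simp_rw [ih, sum_sub_distrib, sum_const, ← mul_sum, sum_boole, filter_filter, hcond,
      π.card_filter_ne_and_eq hπ, nsmul_eq_mul, hcard, mul_inv_eq_iff_eq_mul, ← pow_succ']
    split_ifs <;> push_cast <;> ring

theorem abs_card_mul_card_filter_prod_sub_le (hπ : Function.Surjective π)
    (hf : ∀ y : Mˣ, #{a | f a = y} = if π y = s then 0 else 1) (J : ℕ) (w : Mˣ) :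
    |(Fintype.card Mˣ : ℤ) * #{v : Fin (J + 1) → α | ∏ i, f (v i) = w}
        - (Fintype.card Mˣ - Nat.card π.ker) ^ (J + 1)|
      ≤ (Fintype.card Mˣ + Nat.card π.ker) * (Nat.card π.ker : ℤ) ^ J := by
  rw [card_mul_card_filter_prod_eq π s hπ hf]
  set c : ℤ := (Fintype.card Mˣ : ℤ)
  set P : ℤ := (Nat.card π.ker : ℤ)
  have hc : 0 ≤ c := by positivity
  have hP : 0 ≤ P := by positivity
  calc _ = |(-P) ^ J * (P - c * if π w = s ^ (J + 1) then 1 else 0)| := by congr 1; ring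
    _ = P ^ J * |P - c * if π w = s ^ (J + 1) then 1 else 0| := by
        rw [abs_mul, abs_pow, abs_neg, abs_of_nonneg hP]
    _ ≤ (c + P) * P ^ J := by
        rw [mul_comm]
        gcongr
        split_ifs <;> rw [abs_le] <;> constructor <;> linarith

end AvoidingCoset

theorem Units.card_filter_val_eq {M : Type*} [Monoid M] [Fintype Mˣ] [DecidableEq M] (x : M) :
    #{u : Mˣ | (u : M) = x} = if IsUnit x then 1 else 0 := by
  split_ifs with hx
  · rw [card_eq_one]
    exact ⟨hx.unit, by ext u; simp [Units.ext_iff]⟩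
  · rw [card_eq_zero, filter_eq_empty_iff]
    exact fun u _ hu => hx (hu ▸ u.isUnit)

theorem card_filter_units_mul_add_eq {M : Type*} [CommRing M] [Fintype Mˣ] [DecidableEq M]
    {r : M} (hr : IsUnit r) (t y : M) :
    #{u : Mˣ | r * u + t = y} = if IsUnit (y - t) then 1 else 0 := by
  obtain ⟨r, rfl⟩ := hr
  have hsolve (u : Mˣ) : r * (u : M) + t = y ↔ (u : M) = ↑r⁻¹ * (y - t) := by
    rw [Units.eq_inv_mul_iff_mul_eq, eq_sub_iff_add_eq]
  simp_rw [hsolve, Units.card_filter_val_eq, Units.isUnit_units_mul]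

theorem ZMod.isUnit_iff_castHom_ne_zero {p d : ℕ} (hp : p.Prime) (hd : d ≠ 0)
    (x : ZMod (p ^ d)) : IsUnit x ↔ ZMod.castHom (dvd_pow_self p hd) (ZMod p) x ≠ 0 := by
  have : NeZero (p ^ d) := ⟨pow_ne_zero d hp.ne_zero⟩
  rw [← ZMod.natCast_zmod_val x, ZMod.isUnit_natCast_iff_not_dvd_pow hp (Nat.pos_of_ne_zero hd),
    map_natCast, Ne, ZMod.natCast_eq_zero_iff]

theorem ZMod.card_ker_unitsMap_prime_pow {p d : ℕ} (hp : p.Prime) (hd : d ≠ 0) :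
    Nat.card (ZMod.unitsMap (dvd_pow_self p hd)).ker = p ^ (d - 1) := by
  have : NeZero p := ⟨hp.ne_zero⟩
  have : NeZero (p ^ d) := ⟨pow_ne_zero d hp.ne_zero⟩
  have h := (ZMod.unitsMap (dvd_pow_self p hd)).ker.card_mul_index
  rw [Subgroup.index_ker, MonoidHom.range_eq_top.mpr (ZMod.unitsMap_surjective _),
    Subgroup.card_top, Nat.card_eq_fintype_card (α := (ZMod p)ˣ),
    Nat.card_eq_fintype_card (α := (ZMod (p ^ d))ˣ), ZMod.card_units_eq_totient,
    ZMod.card_units_eq_totient, Nat.totient_prime hp,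
    Nat.totient_prime_pow hp (Nat.pos_of_ne_zero hd)] at h
  exact Nat.eq_of_mul_eq_mul_right (Nat.sub_pos_of_lt hp.one_lt) h

theorem stmt13_general (R S : ℤ) (ℓ : ℕ) (hℓ : ℓ.Prime)
    (hRS : ¬ (ℓ : ℤ) ∣ R * S)
    (e J : ℕ) (he : 1 ≤ e) (hJ : 1 ≤ J) (w : (ZMod (ℓ ^ e))ˣ) :
    |(Nat.totient (ℓ ^ e) : ℝ) *
        (Set.ncard {v : Fin J → (ZMod (ℓ ^ e))ˣ |
          ∏ i, ((R : ZMod (ℓ ^ e)) * ((v i : (ZMod (ℓ ^ e))ˣ) : ZMod (ℓ ^ e))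
              + (S : ZMod (ℓ ^ e))) = (w : ZMod (ℓ ^ e))} : ℝ)
      - ((Nat.totient (ℓ ^ e) : ℝ) - (ℓ : ℝ) ^ (e - 1)) ^ J|
      ≤ 2 * (ℓ : ℝ) ^ e * ((ℓ : ℝ) ^ (e - 1)) ^ (J - 1) := by
  have : Fact ℓ.Prime := ⟨hℓ⟩
  have he₀ : e ≠ 0 := by omega
  obtain ⟨J, rfl⟩ : ∃ k, J = k + 1 := ⟨J - 1, by omega⟩
  have hR : IsUnit (R : ZMod (ℓ ^ e)) := by
    rw [ZMod.isUnit_iff_castHom_ne_zero hℓ he₀, map_intCast, Ne,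
      ZMod.intCast_zmod_eq_zero_iff_dvd]
    exact fun h => hRS (h.mul_right S)
  have hS : (S : ZMod ℓ) ≠ 0 := by
    rw [Ne, ZMod.intCast_zmod_eq_zero_iff_dvd]
    exact fun h => hRS (h.mul_left R)
  have hf (y : (ZMod (ℓ ^ e))ˣ) : #{u : (ZMod (ℓ ^ e))ˣ | (R : ZMod (ℓ ^ e)) * u + S = y} =
      if ZMod.unitsMap (dvd_pow_self ℓ he₀) y = Units.mk0 _ hS then 0 else 1 := by
    simp_rw [card_filter_units_mul_add_eq hR, ZMod.isUnit_iff_castHom_ne_zero hℓ he₀, map_sub,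
      map_intCast, sub_ne_zero, Units.ext_iff, Units.val_mk0, ZMod.unitsMap_def, Units.coe_map]
    exact ite_not _ _ _
  have key := abs_card_mul_card_filter_prod_sub_le _ _ (ZMod.unitsMap_surjective _) hf J w
  rw [ZMod.card_units_eq_totient, ZMod.card_ker_unitsMap_prime_pow hℓ he₀] at key
  rw [Set.ncard_eq_toFinset_card', Set.toFinset_ofPred, Nat.add_sub_cancel]
  have hφ : (Nat.totient (ℓ ^ e) : ℝ) ≤ (ℓ : ℝ) ^ e := by exact_mod_cast Nat.totient_le _
  have hP : (ℓ : ℝ) ^ (e - 1) ≤ (ℓ : ℝ) ^ e :=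
    pow_le_pow_right₀ (by exact_mod_cast hℓ.one_le) (Nat.sub_le e 1)
  calc _ ≤ ((Nat.totient (ℓ ^ e) : ℝ) + (ℓ : ℝ) ^ (e - 1)) * ((ℓ : ℝ) ^ (e - 1)) ^ J := by
        exact_mod_cast key
    _ ≤ 2 * (ℓ : ℝ) ^ e * ((ℓ : ℝ) ^ (e - 1)) ^ J := by
        gcongr ?_ * _
        linarith

/-- **Equation (4.3).** For an odd prime `ℓ` with `ℓ ∤ RS`, the number `V` of tuples
`(v₁, …, v_J)` of units mod `ℓ^e` with `∏ (R vᵢ + S) ≡ w (mod ℓ^e)` satisfies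
`|φ(ℓ^e) V − (φ(ℓ^e) − ℓ^{e-1})^J| ≤ 2 ℓ^e (ℓ^{e-1})^{J-1}`. -/
theorem stmt13 (R S : ℤ) (ℓ : ℕ) (hℓ : ℓ.Prime) (hodd : ℓ ≠ 2)
    (hRS : ¬ (ℓ : ℤ) ∣ R * S)
    (e J : ℕ) (he : 1 ≤ e) (hJ : 1 ≤ J) (w : (ZMod (ℓ ^ e))ˣ) :
    |(Nat.totient (ℓ ^ e) : ℝ) *
        (Set.ncard {v : Fin J → (ZMod (ℓ ^ e))ˣ |
          ∏ i, ((R : ZMod (ℓ ^ e)) * ((v i : (ZMod (ℓ ^ e))ˣ) : ZMod (ℓ ^ e))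
              + (S : ZMod (ℓ ^ e))) = (w : ZMod (ℓ ^ e))} : ℝ)
      - ((Nat.totient (ℓ ^ e) : ℝ) - (ℓ : ℝ) ^ (e - 1)) ^ J|
      ≤ 2 * (ℓ : ℝ) ^ e * ((ℓ : ℝ) ^ (e - 1)) ^ (J - 1) :=
  stmt13_general R S ℓ hℓ hRS e J he hJ w
end

section
/- Let ℓ be a prime, let 𝔽̄_ℓ be an algebraic closure of the field 𝔽_ℓ with ℓ elements, let F(x) ∈ 𝔽_ℓ[x] be a nonconstant polynomial with no repeated roots in 𝔽̄_ℓ, and let w ∈ 𝔽_ℓ with w ≠ 0. Then the polynomial F(x)·F(y) − w is irreducible in 𝔽̄_ℓ[x, y]; that is, F(x)F(y) − w is absolutely irreducible over 𝔽_ℓ. -/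
open Polynomial

/-- Auxiliary: over an algebraically closed field `K`, if `g ∈ K[x]` is nonconstant with only
simple roots and `c ≠ 0`, then `g(x)g(y) - c` is irreducible in `K[x][y]`. -/
theorem aux_irred {K : Type*} [Field K] [IsAlgClosed K] (g : K[X]) (hdeg : 0 < g.natDegree)
    (hsep : ∀ a : K, g.rootMultiplicity a ≤ 1) (c : K) (hc : c ≠ 0) :
    Irreducible ((C g : K[X][X]) * g.map C - C (C c)) := by
  set n := g.natDegree with hn
  set P : K[X][X] := C g * g.map C - C (C c) with hPdef
  have hg0 : g ≠ 0 := by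
    intro h
    rw [hn, h, natDegree_zero] at hdeg
    exact lt_irrefl 0 hdeg
  -- coefficients of P (as a polynomial in the outer variable y)
  have hcoeff : ∀ i, P.coeff i = g * C (g.coeff i) - if i = 0 then C c else 0 := by
    intro i
    rw [hPdef, coeff_sub, coeff_C_mul, coeff_map, coeff_C]
  -- a simple root of g
  obtain ⟨a, ha⟩ := IsAlgClosed.exists_root g ((natDegree_pos_iff_degree_pos.mp hdeg).ne')
  have hga : g.eval a = 0 := ha
  have hmult : g.rootMultiplicity a = 1 :=
    le_antisymm (hsep a) ((rootMultiplicity_pos hg0).mpr ha)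
  have hlc : g.coeff n ≠ 0 := by
    rw [hn, coeff_natDegree]
    exact leadingCoeff_ne_zero.mpr hg0
  -- the key nonzero coefficient
  have hkey : g * C (g.coeff 0) - C c ≠ 0 := by
    intro h
    have h2 := congrArg (eval a) h
    rw [eval_sub, eval_mul, hga, zero_mul, zero_sub, eval_C, eval_zero, neg_eq_zero] at h2
    exact hc h2
  -- the prime ideal (X - a)
  set 𝓟 : Ideal K[X] := Ideal.span {X - C a} with h𝓟
  have hprime : 𝓟.IsPrime :=
    (Ideal.span_singleton_prime (X_sub_C_ne_zero a)).mpr (prime_X_sub_C a)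
  have hmem : ∀ p : K[X], p ∈ 𝓟 ↔ p.eval a = 0 := by
    intro p
    rw [h𝓟, Ideal.mem_span_singleton, dvd_iff_isRoot]
    exact Iff.rfl
  -- Q := reflection of P in y
  set Q : K[X][X] := reflect n P with hQdef
  have hQc : ∀ i, Q.coeff i = P.coeff (revAt n i) := fun i => coeff_reflect n P i
  have hQhigh : ∀ i, n < i → Q.coeff i = 0 := by
    intro i hi
    rw [hQc i, revAt_eq_self_of_lt hi, hcoeff i, if_neg (by omega),
      coeff_eq_zero_of_natDegree_lt hi, C_0, mul_zero, sub_zero]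
  have hQlow : ∀ i, i < n → Q.coeff i = g * C (g.coeff (n - i)) := by
    intro i hi
    rw [hQc i, revAt_le hi.le, hcoeff, if_neg (by omega), sub_zero]
  have hQn : Q.coeff n = g * C (g.coeff 0) - C c := by
    rw [hQc n, revAt_le le_rfl, Nat.sub_self, hcoeff, if_pos rfl]
  have hQ0 : Q.coeff 0 = g * C (g.coeff n) := by
    rw [hQc 0, revAt_le (Nat.zero_le n), Nat.sub_zero, hcoeff, if_neg (by omega), sub_zero]
  have hQdeg : Q.natDegree = n := by
    refine le_antisymm (natDegree_le_iff_coeff_eq_zero.mpr fun N hN => hQhigh N hN) ?_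
    exact le_natDegree_of_ne_zero (by rw [hQn]; exact hkey)
  -- Q is Eisenstein at (X - a)
  have hQeis : Q.IsEisensteinAt 𝓟 := by
    refine ⟨?_, ?_, ?_⟩
    · rw [leadingCoeff, hQdeg, hQn, hmem]
      rw [eval_sub, eval_mul, hga, zero_mul, zero_sub, eval_C, neg_eq_zero]
      exact hc
    · intro i hi
      rw [hQdeg] at hi
      rw [hQlow i hi, hmem, eval_mul, hga, zero_mul]
    · rw [hQ0, h𝓟, Ideal.span_singleton_pow, Ideal.mem_span_singleton]
      intro hdvd
      have h2 : (X - C a) ^ 2 ∣ g := by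
        have h3 := hdvd.mul_right (C (g.coeff n)⁻¹)
        rwa [mul_assoc, ← C_mul, mul_inv_cancel₀ hlc, C_1, mul_one] at h3
      have := (le_rootMultiplicity_iff hg0).mpr h2
      omega
  have hQprim : Q.IsPrimitive := by
    intro r hr
    have hall := (C_dvd_iff_dvd_coeff r Q).mp hr
    have hrg : r ∣ g := by
      have h0 := hall 0
      rw [hQ0] at h0
      have h3 := h0.mul_right (C (g.coeff n)⁻¹)
      rwa [mul_assoc, ← C_mul, mul_inv_cancel₀ hlc, C_1, mul_one] at h3
    have hrc : r ∣ C c := by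
      have hn' := hall n
      rw [hQn] at hn'
      have hmul : r ∣ g * C (g.coeff 0) := hrg.mul_right _
      have h4 := dvd_sub hmul hn'
      rwa [sub_sub_cancel] at h4
    exact isUnit_of_dvd_unit hrc (isUnit_C.mpr (Ne.isUnit hc))
  have hQirr : Irreducible Q :=
    hQeis.irreducible hprime hQprim (by rw [hQdeg]; exact hdeg)
  -- Now transfer to P
  have hPn : P.coeff n = g * C (g.coeff n) := by
    rw [hcoeff, if_neg (by omega), sub_zero]
  have hP0' : P.coeff 0 = g * C (g.coeff 0) - C c := by
    rw [hcoeff, if_pos rfl]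
  have hP0ne : P.coeff 0 ≠ 0 := by rw [hP0']; exact hkey
  have hPne : P ≠ 0 := fun h => hP0ne (by rw [h, coeff_zero])
  have hPdeg : P.natDegree = n := by
    refine le_antisymm (natDegree_le_iff_coeff_eq_zero.mpr fun N hN => ?_) ?_
    · rw [hcoeff, if_neg (by omega), coeff_eq_zero_of_natDegree_lt hN, C_0, mul_zero, sub_zero]
    · refine le_natDegree_of_ne_zero ?_
      rw [hPn]
      exact mul_ne_zero hg0 (fun h => hlc (by simpa using h))
  have hPprim : P.IsPrimitive := by
    intro r hr
    have hall := (C_dvd_iff_dvd_coeff r P).mp hr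
    have hrg : r ∣ g := by
      have h0 := hall n
      rw [hPn] at h0
      have h3 := h0.mul_right (C (g.coeff n)⁻¹)
      rwa [mul_assoc, ← C_mul, mul_inv_cancel₀ hlc, C_1, mul_one] at h3
    have hrc : r ∣ C c := by
      have h0 := hall 0
      rw [hP0'] at h0
      have hmul : r ∣ g * C (g.coeff 0) := hrg.mul_right _
      have h4 := dvd_sub hmul h0
      rwa [sub_sub_cancel] at h4
    exact isUnit_of_dvd_unit hrc (isUnit_C.mpr (Ne.isUnit hc))
  have key : ∀ A B : K[X][X], P = A * B → IsUnit (reflect A.natDegree A) → IsUnit A := by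
    intro A B hAB h
    have hAc0 : A.coeff 0 ≠ 0 := by
      intro h0
      apply hP0ne
      rw [hAB, mul_coeff_zero, h0, zero_mul]
    have h1 : (reflect A.natDegree A).coeff A.natDegree = A.coeff 0 := by
      rw [coeff_reflect, revAt_le le_rfl, Nat.sub_self]
    have h2 : A.natDegree = 0 := by
      have h3 := le_natDegree_of_ne_zero (h1.symm ▸ hAc0)
      rw [natDegree_eq_zero_of_isUnit h] at h3
      omega
    rw [eq_C_of_natDegree_eq_zero h2]
    refine isUnit_C.mpr (hPprim _ ?_)
    rw [← eq_C_of_natDegree_eq_zero h2]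
    exact ⟨B, hAB⟩
  constructor
  · intro hu
    have := natDegree_eq_zero_of_isUnit hu
    rw [hPdeg] at this
    omega
  · intro A B hAB
    have hA0 : A ≠ 0 := fun h => hPne (by rw [hAB, h, zero_mul])
    have hB0 : B ≠ 0 := fun h => hPne (by rw [hAB, h, mul_zero])
    have hsum : A.natDegree + B.natDegree = n := by
      rw [← natDegree_mul hA0 hB0, ← hAB, hPdeg]
    have hrefl : Q = reflect A.natDegree A * reflect B.natDegree B := by
      rw [hQdef, hAB, ← hsum]
      exact reflect_mul A B le_rfl le_rfl
    rcases hQirr.isUnit_or_isUnit hrefl with h | h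
    · exact Or.inl (key A B hAB h)
    · exact Or.inr (key B A (by rw [hAB, mul_comm]) h)

/-- **Absolute irreducibility claim from the proof of Theorem 1.4(b).** Let `ℓ` be a prime,
`F ∈ 𝔽_ℓ[x]` nonconstant with no repeated roots in an algebraic closure `K = 𝔽̄_ℓ`, and
`w ∈ 𝔽_ℓ` nonzero. Then `F(x)F(y) − w` is irreducible in `K[x][y] = 𝔽̄_ℓ[x, y]`, i.e.
`F(x)F(y) − w` is absolutely irreducible over `𝔽_ℓ`. Here we work in
`Polynomial (Polynomial K)`, the inner variable being `x` and the outer one `y`: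
`F(x)` is `C (F.map (algebraMap (ZMod ℓ) K))` and `F(y)` is
`(F.map (algebraMap (ZMod ℓ) K)).map C`. -/
theorem stmt16 (ℓ : ℕ) [Fact (Nat.Prime ℓ)] (F : Polynomial (ZMod ℓ))
    (hFdeg : 0 < F.natDegree)
    (hsep : ∀ a : AlgebraicClosure (ZMod ℓ),
      (F.map (algebraMap (ZMod ℓ) (AlgebraicClosure (ZMod ℓ)))).rootMultiplicity a ≤ 1)
    (w : ZMod ℓ) (hw : w ≠ 0) :
    Irreducible
      ((C (F.map (algebraMap (ZMod ℓ) (AlgebraicClosure (ZMod ℓ)))) :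
          Polynomial (Polynomial (AlgebraicClosure (ZMod ℓ))))
        * (F.map (algebraMap (ZMod ℓ) (AlgebraicClosure (ZMod ℓ)))).map C
        - C (C (algebraMap (ZMod ℓ) (AlgebraicClosure (ZMod ℓ)) w))) := by
  have hinj : Function.Injective (algebraMap (ZMod ℓ) (AlgebraicClosure (ZMod ℓ))) :=
    (algebraMap (ZMod ℓ) (AlgebraicClosure (ZMod ℓ))).injective
  refine aux_irred _ ?_ hsep _ ?_
  · rwa [natDegree_map_eq_of_injective hinj]
  · intro h
    exact hw (hinj (by simpa using h))
end
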